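/- For every integer n ≥ 1, the set A = {a_x : x ∈ L_n} is a resolving set in G_n for the set {a_x : x ∈ L_n} ∪ {b_y : y ∈ W_n} ∪ {c_{0⋯0}, d_∅}, where 0⋯0 denotes the all-zeros word of length n and ∅ denotes the empty word. -/

import Mathlib

/-- `L n`: binary words of length at most `n` that are empty or end in `1` (`true`). -/
abbrev Ln (n : ℕ) := {x : List Bool // x.length ≤ n ∧ (x = [] ∨ x.getLast? = some true)}

/-- `W n`: binary words of length exactly `n`. -/
abbrev Wn (n : ℕ) := {y : List Bool // y.length = n}

/-- Vertex set of the graph `G_n`: a copy of `L n` (the `a` vertices), two copies of `W n`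
(the `b` and `c` vertices) and another copy of `L n` (the `d` vertices). -/
abbrev VGn (n : ℕ) := Ln n ⊕ Wn n ⊕ Wn n ⊕ Ln n

def va {n : ℕ} (x : Ln n) : VGn n := Sum.inl x
def vb {n : ℕ} (y : Wn n) : VGn n := Sum.inr (Sum.inl y)
def vc {n : ℕ} (y : Wn n) : VGn n := Sum.inr (Sum.inr (Sum.inl y))
def vd {n : ℕ} (x : Ln n) : VGn n := Sum.inr (Sum.inr (Sum.inr x))

/-- The graph `G_n`: edges `b_y c_z` for all `y, z ∈ W n`, `a_x b_y` whenever `x` is a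
prefix of `y`, and `d_x c_y` whenever `x` is a prefix of `y`. -/
def Gn (n : ℕ) : SimpleGraph (VGn n) where
  Adj u v :=
    match u, v with
    | Sum.inl x, Sum.inr (Sum.inl y) => x.1 <+: y.1
    | Sum.inr (Sum.inl y), Sum.inl x => x.1 <+: y.1
    | Sum.inr (Sum.inl _), Sum.inr (Sum.inr (Sum.inl _)) => True
    | Sum.inr (Sum.inr (Sum.inl _)), Sum.inr (Sum.inl _) => True
    | Sum.inr (Sum.inr (Sum.inl y)), Sum.inr (Sum.inr (Sum.inr x)) => x.1 <+: y.1
    | Sum.inr (Sum.inr (Sum.inr x)), Sum.inr (Sum.inr (Sum.inl y)) => x.1 <+: y.1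
    | _, _ => False
  symm := by
    constructor
    rintro (x | y | z | w) (x' | y' | z' | w') h <;> exact h
  loopless := by
    constructor
    rintro (x | y | z | w) h <;> exact h

/-!
The vertices fall into the layers `a, b, c, d` of `G_n`, and every edge joins consecutive
layers, so a vertex of layer `k` lies at distance at least `k` from every `a`-vertex. Hence
`c`-vertices are at distance `2` and `d`-vertices at distance `3` from each `a_x`, while `b_y`
is at distance `1` from `a_x` exactly when `x` is a prefix of `y`. The landmark `a_∅` thus
separates vertices of different layers, and two words `y ≠ y'` are separated by `a_x` with
`x` the longest common prefix followed by `1`.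
-/

open SimpleGraph

theorem SimpleGraph.Walk.apply_le_apply_add_length {V : Type*} {G : SimpleGraph V}
    (f : V → ℕ) (hf : ∀ ⦃u v⦄, G.Adj u v → f v ≤ f u + 1) {u v : V} (p : G.Walk u v) :
    f v ≤ f u + p.length := by
  induction p with
  | nil => simp
  | cons h _ ih => have := hf h; rw [Walk.length_cons]; omega

theorem SimpleGraph.Reachable.apply_le_apply_add_dist {V : Type*} {G : SimpleGraph V}
    (f : V → ℕ) (hf : ∀ ⦃u v⦄, G.Adj u v → f v ≤ f u + 1) {u v : V} (h : G.Reachable u v) :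
    f v ≤ f u + G.dist u v := by
  obtain ⟨p, hp⟩ := h.exists_walk_length_eq_dist
  exact hp ▸ p.apply_le_apply_add_length f hf

theorem List.exists_getLast_true_not_isPrefix_iff :
    ∀ y y' : List Bool, y.length = y'.length → y ≠ y' →
      ∃ x : List Bool, x.getLast? = some true ∧ ¬(x <+: y ↔ x <+: y')
  | [], [], _, hne => absurd rfl hne
  | b :: t, b' :: t', hlen, hne => by
    by_cases hb : b = b'
    · subst hb
      obtain ⟨x, hlast, hsep⟩ := exists_getLast_true_not_isPrefix_iff t t'
        (by simpa using hlen) (fun h => hne (h ▸ rfl))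
      refine ⟨b :: x, ?_, by simpa [cons_prefix_cons] using hsep⟩
      cases x with
      | nil => simp at hlast
      | cons _ _ => simpa using hlast
    · refine ⟨[true], rfl, ?_⟩
      cases b <;> cases b' <;> simp_all [cons_prefix_cons]

variable {n : ℕ}

def Ln.pad (x : Ln n) : Wn n :=
  ⟨x.1 ++ List.replicate (n - x.1.length) false, by simp [Nat.add_sub_cancel' x.2.1]⟩

theorem Ln.prefix_pad (x : Ln n) : x.1 <+: x.pad.1 := List.prefix_append _ _

def Ln.nil : Ln n := ⟨[], by simp⟩

namespace Gn

theorem adj_va_vb {x : Ln n} {y : Wn n} (h : x.1 <+: y.1) : (Gn n).Adj (va x) (vb y) := h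

theorem adj_vb_vc (y z : Wn n) : (Gn n).Adj (vb y) (vc z) := trivial

theorem adj_vd_vc {x : Ln n} {y : Wn n} (h : x.1 <+: y.1) : (Gn n).Adj (vd x) (vc y) := h

theorem reachable_vb (u : VGn n) (y : Wn n) : (Gn n).Reachable u (vb y) := by
  rcases u with x | y' | z | x
  · exact (adj_va_vb x.prefix_pad).reachable.trans
      ((adj_vb_vc _ x.pad).reachable.trans (adj_vb_vc y x.pad).reachable.symm)
  · exact (adj_vb_vc y' y').reachable.trans (adj_vb_vc y y').reachable.symm
  · exact (adj_vb_vc y z).reachable.symm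
  · exact (adj_vd_vc x.prefix_pad).reachable.trans (adj_vb_vc y x.pad).reachable.symm

theorem preconnected : (Gn n).Preconnected := fun u v =>
  (reachable_vb u ⟨List.replicate n false, by simp⟩).trans (reachable_vb v _).symm

def layer : VGn n → ℕ
  | .inl _ => 0
  | .inr (.inl _) => 1
  | .inr (.inr (.inl _)) => 2
  | .inr (.inr (.inr _)) => 3

theorem layer_le_succ_of_adj ⦃u v : VGn n⦄ (h : (Gn n).Adj u v) : layer v ≤ layer u + 1 := by
  rcases u with _ | _ | _ | _ <;> rcases v with _ | _ | _ | _ <;>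
    first | exact (h : False).elim | simp [layer]

theorem layer_le_dist_va (u : VGn n) (x : Ln n) : layer u ≤ (Gn n).dist u (va x) := by
  rw [dist_comm]
  simpa [layer, va] using preconnected (va x) u |>.apply_le_apply_add_dist layer
    layer_le_succ_of_adj

theorem dist_vb_va_eq_one_iff (y : Wn n) (x : Ln n) :
    (Gn n).dist (vb y) (va x) = 1 ↔ x.1 <+: y.1 := by
  rw [dist_eq_one_iff_adj]
  rfl

theorem dist_vc_va (z : Wn n) (x : Ln n) : (Gn n).dist (vc z) (va x) = 2 := by
  have hle : (Gn n).dist (vc z) (va x) ≤ 2 :=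
    dist_le (.cons (adj_vb_vc x.pad z).symm (.cons (adj_va_vb x.prefix_pad).symm .nil))
  have hge : 2 ≤ (Gn n).dist (vc z) (va x) := layer_le_dist_va (vc z) x
  omega

theorem dist_vd_va (x' x : Ln n) : (Gn n).dist (vd x') (va x) = 3 := by
  have hle : (Gn n).dist (vd x') (va x) ≤ 3 :=
    dist_le (.cons (adj_vd_vc x'.prefix_pad) (.cons (adj_vb_vc x.pad x'.pad).symm
      (.cons (adj_va_vb x.prefix_pad).symm .nil)))
  have hge : 3 ≤ (Gn n).dist (vd x') (va x) := layer_le_dist_va (vd x') x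
  omega

theorem dist_va_ne_of_ne {u : VGn n} {x : Ln n} (h : u ≠ va x) :
    (Gn n).dist u (va x) ≠ (Gn n).dist (va x) (va x) := by
  rw [dist_self]
  exact ((preconnected u (va x)).pos_dist_of_ne h).ne'

theorem exists_dist_vb_va_ne {y y' : Wn n} (h : y ≠ y') :
    ∃ x : Ln n, (Gn n).dist (vb y) (va x) ≠ (Gn n).dist (vb y') (va x) := by
  obtain ⟨x, hlast, hsep⟩ := List.exists_getLast_true_not_isPrefix_iff y.1 y'.1
    (y.2.trans y'.2.symm) (fun h' => h (Subtype.ext h'))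
  have hlen : x.length ≤ n := by
    by_cases hx : x <+: y.1
    · exact y.2 ▸ hx.length_le
    · exact y'.2 ▸ ((not_iff.mp hsep).mp hx).length_le
  let xL : Ln n := ⟨x, hlen, .inr hlast⟩
  refine ⟨xL, fun heq => hsep ?_⟩
  exact (dist_vb_va_eq_one_iff y xL).symm.trans (by rw [heq]; exact dist_vb_va_eq_one_iff y' xL)

theorem dist_vb_va_nil (y : Wn n) : (Gn n).dist (vb y) (va Ln.nil) = 1 :=
  (dist_vb_va_eq_one_iff y _).mpr List.nil_prefix

end Gn

/-- For `n ≥ 1`, the set `A = {a_x : x ∈ L_n}` is a resolving set in `G_n` for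
`{a_x : x ∈ L_n} ∪ {b_y : y ∈ W_n} ∪ {c_{0⋯0}, d_∅}`. -/
theorem stmt12 (n : ℕ) :
    ∀ u u' : VGn n,
      ((∃ x, u = va x) ∨ (∃ y, u = vb y) ∨
        u = vc ⟨List.replicate n false, by simp⟩ ∨ u = vd ⟨[], by simp⟩) →
      ((∃ x, u' = va x) ∨ (∃ y, u' = vb y) ∨
        u' = vc ⟨List.replicate n false, by simp⟩ ∨ u' = vd ⟨[], by simp⟩) →
      u ≠ u' →
      ∃ x : Ln n, (Gn n).dist u (va x) ≠ (Gn n).dist u' (va x) := by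
  intro u u' hu hu' hne
  rcases hu with ⟨x, rfl⟩ | hu
  · exact ⟨x, (Gn.dist_va_ne_of_ne hne.symm).symm⟩
  rcases hu' with ⟨x, rfl⟩ | hu'
  · exact ⟨x, Gn.dist_va_ne_of_ne hne⟩
  rcases hu with ⟨y, rfl⟩ | rfl | rfl <;> rcases hu' with ⟨y', rfl⟩ | rfl | rfl
  · exact Gn.exists_dist_vb_va_ne fun h => hne (h ▸ rfl)
  all_goals first
    | exact absurd rfl hne
    | exact ⟨Ln.nil, by simp [Gn.dist_vb_va_nil, Gn.dist_vc_va, Gn.dist_vd_va]⟩
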